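/- arXiv:1904.11072 — 7 statements merged into one kernel-verified Lean document; each statement's English description precedes it below -/
import Mathlib

section
/- Let X be a Cantor space with a fixed compatible metric d, let G be a countable group, and let Φ : G → Homeo(X) be a minimal action (every orbit {Φ(g)(x) : g ∈ G} is dense in X). Then the family of maps {Φ(g) : g ∈ G} is equicontinuous with respect to d if and only if for every clopen subset U ⊆ X the orbit {Φ(g)(U) : g ∈ G} is a finite collection of subsets of X. -/
open Set Topology Filter

section CantorActionDefs

variable {X : Type*} [MetricSpace X] {G : Type*} [Group G]

/-- `Φ : G → Homeo(X)` is a group homomorphism, i.e. an action of `G` on `X` by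
homeomorphisms. -/
def IsActionHom (Φ : G → X ≃ₜ X) : Prop :=
  (∀ x : X, Φ 1 x = x) ∧ ∀ g h : G, ∀ x : X, Φ (g * h) x = Φ g (Φ h x)

/-- The action is minimal: every orbit is dense. -/
def IsMinimalAction (Φ : G → X ≃ₜ X) : Prop :=
  ∀ x : X, Dense (Set.range fun g : G => Φ g x)

/-- The family `{Φ g : g ∈ G}` is equicontinuous with respect to the metric on `X`. -/
def IsEquicontinuousAction (Φ : G → X ≃ₜ X) : Prop :=
  ∀ ε : ℝ, 0 < ε → ∃ δ : ℝ, 0 < δ ∧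
    ∀ g : G, ∀ x y : X, dist x y < δ → dist (Φ g x) (Φ g y) < ε

/-- A Cantor action: a minimal equicontinuous action by homeomorphisms. -/
def IsCantorAction (Φ : G → X ≃ₜ X) : Prop :=
  IsActionHom Φ ∧ IsMinimalAction Φ ∧ IsEquicontinuousAction Φ

/-- A clopen subset adapted to the action: nonempty, clopen, and any translate meeting it
equals it. -/
def IsAdapted (Φ : G → X ≃ₜ X) (U : Set X) : Prop :=
  U.Nonempty ∧ IsClopen U ∧ ∀ g : G, (Φ g '' U ∩ U).Nonempty → Φ g '' U = U

/-- The Ellis (closure) group `G(Φ)`: the closure of `{Φ g : g ∈ G}` in `C(X,X)` with the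
compact-open topology. -/
def actionClosure (Φ : G → X ≃ₜ X) : Set C(X, X) :=
  closure (Set.range fun g : G => (Φ g : C(X, X)))

/-- An adapted neighborhood basis at `x`: a properly descending chain of adapted clopen
sets starting at `X`, containing `x`, with intersection `{x}`. -/
def IsAdaptedBasis (Φ : G → X ≃ₜ X) (x : X) (U : ℕ → Set X) : Prop :=
  U 0 = Set.univ ∧ (∀ ℓ : ℕ, IsAdapted Φ (U ℓ)) ∧ (∀ ℓ : ℕ, x ∈ U ℓ) ∧
    (∀ ℓ : ℕ, U (ℓ + 1) ⊂ U ℓ) ∧ (⋂ ℓ : ℕ, U ℓ) = ({x} : Set X)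

/-- The stabilizer chain `K_ℓ`: elements of the Ellis group fixing `U ℓ` pointwise. -/
def stabChain (Φ : G → X ≃ₜ X) (U : ℕ → Set X) (ℓ : ℕ) : Set C(X, X) :=
  {f ∈ actionClosure Φ | ∀ z ∈ U ℓ, f z = z}

/-- The stabilizer chain is eventually constant (the action is stable along `U`). -/
def IsStableChain (Φ : G → X ≃ₜ X) (U : ℕ → Set X) : Prop :=
  ∃ ℓ₀ : ℕ, ∀ ℓ : ℕ, ℓ₀ ≤ ℓ → stabChain Φ U ℓ = stabChain Φ U ℓ₀

/-- The action of the Ellis group is locally completely quasi-analytic. -/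
def IsLCQA (Φ : G → X ≃ₜ X) : Prop :=
  ∃ ε : ℝ, 0 < ε ∧ ∀ U : Set X, IsAdapted Φ U → Metric.diam U < ε →
    ∀ V : Set X, IsAdapted Φ V → V ⊆ U →
      ∀ f₁ ∈ actionClosure Φ, ∀ f₂ ∈ actionClosure Φ,
        (∀ z ∈ V, f₁ z = f₂ z) → ∀ z ∈ U, f₁ z = f₂ z

/-- `f` is a non-Hausdorff element of the Ellis group at `x`. -/
def IsNonHausdorffElem (Φ : G → X ≃ₜ X) (f : C(X, X)) (x : X) : Prop :=
  f ∈ actionClosure Φ ∧ f x = x ∧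
    (∀ W : Set X, IsClopen W → x ∈ W → ¬ ∀ z ∈ W, f z = z) ∧
    ∃ (xs : ℕ → X) (W : ℕ → Set X), Filter.Tendsto xs Filter.atTop (nhds x) ∧
      ∀ i : ℕ, xs i ∈ W i ∧ IsClopen (W i) ∧ ⇑f '' W i = W i ∧ ∀ z ∈ W i, f z = z

/-- The restrictions to an invariant set `U` of the maps `Φ g` with `Φ g (U) = U`,
as elements of `C(U,U)`. -/
def restrictedMaps (Φ : G → X ≃ₜ X) (U : Set X) : Set C(U, U) :=
  {u : C(U, U) | ∃ g : G, Φ g '' U = U ∧ ∀ z : U, (u z : X) = Φ g (z : X)}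

/-- The stabilizer subgroup `G_U = {g : G | Φ g (U) = U}` of a set `U`. -/
def setStabilizer (Φ : G → X ≃ₜ X) (hΦ : IsActionHom Φ) (U : Set X) : Subgroup G where
  carrier := {g : G | Φ g '' U = U}
  one_mem' := by
    show ⇑(Φ 1) '' U = U
    have h : ⇑(Φ 1) = id := funext hΦ.1
    rw [h, Set.image_id]
  mul_mem' := by
    intro a b ha hb
    show ⇑(Φ (a * b)) '' U = U
    have h : ⇑(Φ (a * b)) = ⇑(Φ a) ∘ ⇑(Φ b) := funext fun z => hΦ.2 a b z
    rw [h, Set.image_comp]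
    rw [show ⇑(Φ b) '' U = U from hb, show ⇑(Φ a) '' U = U from ha]
  inv_mem' := by
    intro a ha
    show ⇑(Φ a⁻¹) '' U = U
    have hcomp : ⇑(Φ a⁻¹) ∘ ⇑(Φ a) = id := funext fun z => by
      show Φ a⁻¹ (Φ a z) = z
      have h2 := hΦ.2 a⁻¹ a z
      rw [inv_mul_cancel] at h2
      rw [← h2]
      exact hΦ.1 z
    calc ⇑(Φ a⁻¹) '' U = ⇑(Φ a⁻¹) '' (⇑(Φ a) '' U) := by
            rw [show ⇑(Φ a) '' U = U from ha]
      _ = (⇑(Φ a⁻¹) ∘ ⇑(Φ a)) '' U := (Set.image_comp _ _ _).symm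
      _ = U := by rw [hcomp, Set.image_id]

end CantorActionDefs

section ChainDefs

variable {G : Type*} [Group G]

/-- A group chain in `G`: descending subgroups starting at `G`, each of finite index in
the previous one. -/
def IsGroupChain (K : ℕ → Subgroup G) : Prop :=
  K 0 = ⊤ ∧ ∀ ℓ : ℕ, K (ℓ + 1) ≤ K ℓ ∧ (K (ℓ + 1)).relIndex (K ℓ) ≠ 0

/-- The inverse limit `lim← G ⧸ C ℓ` of the coset spaces along a chain, as a subset of
the product. -/
def chainLimitSet (C : ℕ → Subgroup G) : Set (∀ ℓ : ℕ, G ⧸ C ℓ) :=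
  {σ | ∀ ℓ : ℕ, ∃ g : G, σ ℓ = (g : G ⧸ C ℓ) ∧ σ (ℓ + 1) = (g : G ⧸ C (ℓ + 1))}

/-- The inverse limit topology on `lim← G ⧸ C ℓ`: the subspace topology from the product
of the discrete coset spaces. -/
def chainLimitTop (C : ℕ → Subgroup G) : TopologicalSpace (chainLimitSet C) :=
  TopologicalSpace.induced Subtype.val
    (@Pi.topologicalSpace ℕ (fun ℓ => G ⧸ C ℓ) fun _ => ⊥)

/-- The basepoint `(e C_ℓ)_ℓ` of the inverse limit. -/
def chainBasepoint (C : ℕ → Subgroup G) : chainLimitSet C :=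
  ⟨fun ℓ => ((1 : G) : G ⧸ C ℓ), fun _ => ⟨1, rfl, rfl⟩⟩

theorem smul_mem_chainLimitSet {C : ℕ → Subgroup G} (g : G) {σ : ∀ ℓ : ℕ, G ⧸ C ℓ}
    (hσ : σ ∈ chainLimitSet C) : (fun ℓ => g • σ ℓ) ∈ chainLimitSet C := by
  intro ℓ
  obtain ⟨k, h1, h2⟩ := hσ ℓ
  refine ⟨g * k, ?_, ?_⟩
  · show g • σ ℓ = _
    rw [h1]; rfl
  · show g • σ (ℓ + 1) = _
    rw [h2]; rfl

/-- The conjugate subgroup `g H g⁻¹`. -/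
def conjSubgroup (g : G) (H : Subgroup G) : Subgroup G :=
  H.map (MulAut.conj g).toMonoidHom

/-- Equivalence of group chains (interlacing). -/
def ChainsEquivalent (Gc Hc : ℕ → Subgroup G) : Prop :=
  ∃ K : ℕ → Subgroup G, IsGroupChain K ∧
    ∃ ls js : ℕ → ℕ, StrictMono ls ∧ StrictMono js ∧
      ∀ k : ℕ, K (2 * k) = Gc (ls k) ∧ K (2 * k + 1) = Hc (js k)

/-- Conjugate equivalence of group chains. -/
def ChainsConjugateEquivalent (Gc Hc : ℕ → Subgroup G) : Prop :=
  ∃ gs : ℕ → G, (∀ ℓ : ℕ, (gs ℓ)⁻¹ * gs (ℓ + 1) ∈ Gc ℓ) ∧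
    ChainsEquivalent (fun ℓ => conjSubgroup (gs ℓ) (Gc ℓ)) Hc

end ChainDefs

section TwoSpaces

variable {X : Type*} [MetricSpace X] {X' : Type*} [MetricSpace X']
variable {G : Type*} [Group G] {G' : Type*} [Group G']

/-- A continuous orbit equivalence between two actions, implemented by a homeomorphism
`h : X → X'` with locally constant orbit transfer functions. -/
def IsContinuousOrbitEquivalence (Φ : G → X ≃ₜ X) (Ψ : G' → X' ≃ₜ X') (h : X ≃ₜ X') :
    Prop :=
  (∀ (x : X) (g : G), ∃ (k : G') (O : Set X), IsOpen O ∧ x ∈ O ∧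
      ∀ z ∈ O, Ψ k (h z) = h (Φ g z)) ∧
    ∀ (y : X') (k : G'), ∃ (g : G) (O : Set X'), IsOpen O ∧ y ∈ O ∧
      ∀ w ∈ O, Φ g (h.symm w) = h.symm (Ψ k w)

end TwoSpaces

/-!
A clopen set `V` of a compact metric space contains its own `δ`-thickening for some `δ > 0`,
and for fixed `δ > 0` only finitely many sets contain their own `δ`-thickening: each is the
union of the `δ`-balls around the points of a fixed finite `δ`-net that it contains.
Equicontinuity gives one `δ` for all translates of a clopen set, so the translates are finitely
many. Conversely, cover `X` by finitely many clopen sets of diameter `< ε`; their translates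
form a finite family of clopen sets, a common `δ` for their thickenings exists, and it
witnesses equicontinuity at scale `ε`.
-/

open Metric

section Thickening

variable {X : Type*} [PseudoMetricSpace X]

theorem finite_setOf_thickening_subset (hX : TotallyBounded (univ : Set X)) {δ : ℝ}
    (hδ : 0 < δ) : {W : Set X | thickening δ W ⊆ W}.Finite := by
  obtain ⟨s, hs, hcover⟩ := totallyBounded_iff.1 hX δ hδ
  refine (hs.finite_subsets.image fun t => ⋃ c ∈ t, ball c δ).subset fun W hW => ?_
  refine ⟨s ∩ W, inter_subset_left, Subset.antisymm ?_ fun x hx => ?_⟩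
  · exact iUnion₂_subset fun c hc y hy => hW (mem_thickening_iff.2 ⟨c, hc.2, hy⟩)
  · obtain ⟨c, hc, hxc⟩ := mem_iUnion₂.1 (hcover (mem_univ x))
    have hcW : c ∈ W := hW (mem_thickening_iff.2 ⟨x, hx, (dist_comm c x).trans_lt hxc⟩)
    exact mem_iUnion₂.2 ⟨c, ⟨hc, hcW⟩, hxc⟩

variable [CompactSpace X]

theorem IsClopen.exists_thickening_subset {V : Set X} (hV : IsClopen V) :
    ∃ δ > 0, thickening δ V ⊆ V :=
  hV.isClosed.isCompact.exists_thickening_subset_open hV.isOpen subset_rfl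

theorem IsClopen.eventually_thickening_subset {V : Set X} (hV : IsClopen V) :
    ∀ᶠ δ in 𝓝[>] (0 : ℝ), thickening δ V ⊆ V := by
  obtain ⟨δ₀, hδ₀, h⟩ := hV.exists_thickening_subset
  filter_upwards [Ioo_mem_nhdsGT hδ₀] with δ hδ
  exact (thickening_mono hδ.2.le V).trans h

theorem exists_pos_forall_thickening_subset {F : Set (Set X)} (hF : F.Finite)
    (hclopen : ∀ V ∈ F, IsClopen V) : ∃ δ > 0, ∀ V ∈ F, thickening δ V ⊆ V := by
  have h := (eventually_all_finite hF).2 fun V hV => (hclopen V hV).eventually_thickening_subset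
  obtain ⟨δ, hδF, hδ⟩ := (h.and self_mem_nhdsWithin).exists
  exact ⟨δ, hδ, hδF⟩

end Thickening

theorem exists_finite_isClopen_cover_dist_lt {Y : Type*} [MetricSpace Y] [CompactSpace Y]
    [TotallyDisconnectedSpace Y] {ε : ℝ} (hε : 0 < ε) :
    ∃ 𝒱 : Set (Set Y), 𝒱.Finite ∧ (∀ V ∈ 𝒱, IsClopen V) ∧ (∀ y, ∃ V ∈ 𝒱, y ∈ V) ∧
      ∀ V ∈ 𝒱, ∀ y ∈ V, ∀ z ∈ V, dist y z < ε := by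
  have hball : ∀ c : Y, ∃ V, c ∈ V ∧ IsClopen V ∧ V ⊆ ball c (ε / 2) := fun c => by
    obtain ⟨V, ⟨hcV, hV⟩, hVball⟩ :=
      (nhds_basis_clopen c).mem_iff.1 (ball_mem_nhds c (half_pos hε))
    exact ⟨V, hcV, hV, hVball⟩
  choose V hcV hV hVball using hball
  obtain ⟨t, ht⟩ := isCompact_univ.elim_finite_subcover V (fun c => (hV c).isOpen)
    fun c _ => mem_iUnion.2 ⟨c, hcV c⟩
  refine ⟨V '' t, t.finite_toSet.image V, ?_, fun y => ?_, ?_⟩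
  · rintro _ ⟨c, -, rfl⟩
    exact hV c
  · obtain ⟨c, hc, hyc⟩ := mem_iUnion₂.1 (ht (mem_univ y))
    exact ⟨V c, mem_image_of_mem V hc, hyc⟩
  · rintro _ ⟨c, -, rfl⟩ y hy z hz
    calc dist y z ≤ dist y c + dist z c := dist_triangle_right y z c
      _ < ε / 2 + ε / 2 := add_lt_add (hVball c hy) (hVball c hz)
      _ = ε := add_halves ε

section Equicontinuity

variable {X : Type*} [PseudoMetricSpace X] {Y : Type*} [MetricSpace Y] [CompactSpace Y]
  {ι : Type*} {f : ι → X → Y}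

theorem UniformEquicontinuous.finite_range_preimage_of_isClopen
    (hX : TotallyBounded (univ : Set X)) (hf : UniformEquicontinuous f) {V : Set Y}
    (hV : IsClopen V) : (range fun i => f i ⁻¹' V).Finite := by
  obtain ⟨ε, hε, hVε⟩ := hV.exists_thickening_subset
  obtain ⟨δ, hδ, hfδ⟩ := uniformEquicontinuous_iff.1 hf ε hε
  refine (finite_setOf_thickening_subset hX hδ).subset ?_
  rintro _ ⟨i, rfl⟩ z hz
  obtain ⟨x, hx, hzx⟩ := mem_thickening_iff.1 hz
  exact hVε (mem_thickening_iff.2 ⟨f i x, hx, hfδ z x hzx i⟩)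

theorem uniformEquicontinuous_of_finite_range_preimage [CompactSpace X]
    [TotallyDisconnectedSpace Y] (hf : ∀ i, Continuous (f i))
    (hfin : ∀ V, IsClopen V → (range fun i => f i ⁻¹' V).Finite) : UniformEquicontinuous f := by
  refine uniformEquicontinuous_iff.2 fun ε hε => ?_
  obtain ⟨𝒱, h𝒱, h𝒱clopen, h𝒱cover, h𝒱small⟩ :=
    exists_finite_isClopen_cover_dist_lt (Y := Y) hε
  set F := ⋃ V ∈ 𝒱, range fun i => f i ⁻¹' V
  have hFclopen : ∀ W ∈ F, IsClopen W := by
    simp only [F, mem_iUnion₂, mem_range]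
    rintro _ ⟨V, hV, i, rfl⟩
    exact (h𝒱clopen V hV).preimage (hf i)
  obtain ⟨δ, hδ, hFδ⟩ :=
    exists_pos_forall_thickening_subset (h𝒱.biUnion fun V hV => hfin V (h𝒱clopen V hV))
      hFclopen
  refine ⟨δ, hδ, fun x y hxy i => ?_⟩
  obtain ⟨V, hV, hxV⟩ := h𝒱cover (f i x)
  have hyV : f i y ∈ V := hFδ _ (mem_biUnion hV ⟨i, rfl⟩)
    (mem_thickening_iff.2 ⟨x, hxV, (dist_comm y x).trans_lt hxy⟩)
  exact h𝒱small V hV _ hxV _ hyV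

theorem uniformEquicontinuous_iff_forall_isClopen_finite_range_preimage [CompactSpace X]
    [TotallyDisconnectedSpace Y] (hf : ∀ i, Continuous (f i)) :
    UniformEquicontinuous f ↔ ∀ V, IsClopen V → (range fun i => f i ⁻¹' V).Finite :=
  ⟨fun h _ hV => h.finite_range_preimage_of_isClopen isCompact_univ.totallyBounded hV,
    uniformEquicontinuous_of_finite_range_preimage hf⟩

end Equicontinuity

section Action

theorem isEquicontinuousAction_iff_uniformEquicontinuous {X : Type*} [MetricSpace X]
    {G : Type*} {Φ : G → X ≃ₜ X} :
    IsEquicontinuousAction Φ ↔ UniformEquicontinuous fun g => ⇑(Φ g) := by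
  rw [uniformEquicontinuous_iff]
  exact forall₂_congr fun ε _ => exists_congr fun δ => and_congr_right'
    ⟨fun h x y hxy g => h g x y hxy, fun h g x y hxy => h x y hxy g⟩

variable {X : Type*} [MetricSpace X] {G : Type*} [Group G] {Φ : G → X ≃ₜ X}

theorem IsActionHom.symm_eq (hΦ : IsActionHom Φ) (g : G) : (Φ g).symm = Φ g⁻¹ := by
  ext x
  apply (Φ g).injective
  rw [Homeomorph.apply_symm_apply, ← hΦ.2, mul_inv_cancel, hΦ.1]

theorem IsActionHom.range_preimage_eq_range_image (hΦ : IsActionHom Φ) (U : Set X) :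
    (range fun g => Φ g ⁻¹' U) = range fun g => Φ g '' U := by
  have h : ∀ g, Φ g ⁻¹' U = Φ g⁻¹ '' U := fun g => by
    rw [← hΦ.symm_eq, Homeomorph.image_symm]
  simp_rw [h]
  exact inv_surjective.range_comp fun g => Φ g '' U

end Action

theorem stmt0_general {X : Type*} [MetricSpace X] [CompactSpace X] [TotallyDisconnectedSpace X]
    {G : Type*} [Group G] (Φ : G → X ≃ₜ X)
    (hact : IsActionHom Φ) :
    IsEquicontinuousAction Φ ↔
      ∀ U : Set X, IsClopen U → (Set.range fun g : G => Φ g '' U).Finite := by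
  rw [isEquicontinuousAction_iff_uniformEquicontinuous,
    uniformEquicontinuous_iff_forall_isClopen_finite_range_preimage fun g => (Φ g).continuous]
  simp_rw [hact.range_preimage_eq_range_image]

/-- For a minimal action of a countable group on a Cantor space,
equicontinuity is equivalent to every clopen set having finite orbit. -/
theorem stmt0 {X : Type*} [MetricSpace X] [CompactSpace X] [TotallyDisconnectedSpace X]
    [Nonempty X] (hX : Perfect (Set.univ : Set X))
    {G : Type*} [Group G] [Countable G] (Φ : G → X ≃ₜ X)
    (hact : IsActionHom Φ) (hmin : IsMinimalAction Φ) :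
    IsEquicontinuousAction Φ ↔
      ∀ U : Set X, IsClopen U → (Set.range fun g : G => Φ g '' U).Finite :=
  stmt0_general Φ hact
end

section
/- Let (X,G,Φ) be a Cantor action. For every x ∈ X and every clopen set W ⊆ X with x ∈ W, there exists a clopen set U adapted to the action with x ∈ U ⊆ W. -/
open Set Topology Filter

/-!
The itinerary of a point `y` records, for each `g`, whether `Φ g y` lies in `W`. By
equicontinuity and compactness the itinerary is locally constant, so its fibres are clopen;
since `Φ k` shifts itineraries by `k`, it maps fibres onto fibres, so two fibres that meet
coincide. The fibre through `x` is therefore adapted, and it lies in `W` because its points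
agree with `x` at `g = 1`.
-/

section Itinerary

variable {X : Type*} [MetricSpace X] {G : Type*} {Φ : G → X ≃ₜ X}

def itinerary (Φ : G → X ≃ₜ X) (W : Set X) (y : X) : G → Prop :=
  fun g => Φ g y ∈ W

theorem isLocallyConstant_itinerary [CompactSpace X] (hΦ : IsEquicontinuousAction Φ)
    {W : Set X} (hW : IsClopen W) : IsLocallyConstant (itinerary Φ W) := by
  obtain ⟨ε, hε, hWε⟩ :=
    hW.isClosed.isCompact.exists_thickening_subset_open hW.isOpen subset_rfl
  obtain ⟨δ, hδ, hδε⟩ := hΦ ε hε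
  have mem_of_dist_lt : ∀ g y z, dist y z < δ → Φ g y ∈ W → Φ g z ∈ W :=
    fun g y z hyz hy =>
      hWε (Metric.mem_thickening_iff.2 ⟨Φ g y, hy, by rw [dist_comm]; exact hδε g y z hyz⟩)
  refine (IsLocallyConstant.iff_eventually_eq _).2 fun y => ?_
  filter_upwards [Metric.ball_mem_nhds y hδ] with z hz
  funext g
  exact propext ⟨mem_of_dist_lt g z y hz, mem_of_dist_lt g y z (Metric.mem_ball'.1 hz)⟩

namespace IsActionHom

variable [Group G] (hΦ : IsActionHom Φ)
include hΦ

theorem inv_apply_apply (g : G) (y : X) : Φ g⁻¹ (Φ g y) = y := by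
  rw [← hΦ.2, inv_mul_cancel, hΦ.1]

theorem apply_inv_apply (g : G) (y : X) : Φ g (Φ g⁻¹ y) = y := by
  rw [← hΦ.2, mul_inv_cancel, hΦ.1]

theorem symm_apply (g : G) (y : X) : (Φ g).symm y = Φ g⁻¹ y :=
  (Φ g).symm_apply_eq.2 (hΦ.apply_inv_apply g y).symm

theorem image_fiber {Y : Type*} {f : X → Y}
    (hf : ∀ k y z, f y = f z → f (Φ k y) = f (Φ k z)) (k : G) (x : X) :
    Φ k '' {y | f y = f x} = {y | f y = f (Φ k x)} := by
  ext z
  rw [Homeomorph.image_eq_preimage_symm, mem_preimage, hΦ.symm_apply, mem_ofPred_eq,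
    mem_ofPred_eq]
  constructor
  · intro h
    simpa only [hΦ.apply_inv_apply] using hf k _ _ h
  · intro h
    simpa only [hΦ.inv_apply_apply] using hf k⁻¹ _ _ h

theorem isAdapted_fiber {Y : Type*} {f : X → Y} (hlc : IsLocallyConstant f)
    (hf : ∀ k y z, f y = f z → f (Φ k y) = f (Φ k z)) (x : X) :
    IsAdapted Φ {y | f y = f x} := by
  refine ⟨⟨x, rfl⟩, hlc.isClopen_fiber _, fun k ⟨w, hwk, hwx⟩ => ?_⟩
  rw [hΦ.image_fiber hf] at hwk ⊢
  rw [mem_ofPred_eq] at hwk hwx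
  rw [← hwk, hwx]

theorem itinerary_apply (W : Set X) (k : G) (y : X) :
    itinerary Φ W (Φ k y) = fun g => itinerary Φ W y (g * k) := by
  funext g
  simp only [itinerary, hΦ.2]

theorem itinerary_apply_eq_of_eq {W : Set X} (k : G) {y z : X}
    (h : itinerary Φ W y = itinerary Φ W z) :
    itinerary Φ W (Φ k y) = itinerary Φ W (Φ k z) := by
  rw [hΦ.itinerary_apply, hΦ.itinerary_apply, h]

theorem fiber_itinerary_subset {W : Set X} {x : X} (hx : x ∈ W) :
    {y | itinerary Φ W y = itinerary Φ W x} ⊆ W := fun y hy => by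
  have h1 : Φ 1 y ∈ W ↔ Φ 1 x ∈ W := Iff.of_eq (congrFun hy 1)
  rw [hΦ.1, hΦ.1] at h1
  exact h1.2 hx

end IsActionHom

end Itinerary

theorem stmt1_general {X : Type*} [MetricSpace X] [CompactSpace X]
    {G : Type*} [Group G] (Φ : G → X ≃ₜ X) (hΦ : IsCantorAction Φ)
    (x : X) (W : Set X) (hW : IsClopen W) (hxW : x ∈ W) :
    ∃ U : Set X, IsAdapted Φ U ∧ x ∈ U ∧ U ⊆ W := by
  obtain ⟨hact, -, hequi⟩ := hΦ
  exact ⟨{y | itinerary Φ W y = itinerary Φ W x},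
    hact.isAdapted_fiber (isLocallyConstant_itinerary hequi hW)
      (fun k _ _ => hact.itinerary_apply_eq_of_eq k) x,
    rfl, hact.fiber_itinerary_subset hxW⟩

/-- Adapted clopen sets exist inside any clopen neighborhood. -/
theorem stmt1 {X : Type*} [MetricSpace X] [CompactSpace X] [TotallyDisconnectedSpace X]
    [Nonempty X] (hX : Perfect (Set.univ : Set X))
    {G : Type*} [Group G] [Countable G] (Φ : G → X ≃ₜ X) (hΦ : IsCantorAction Φ)
    (x : X) (W : Set X) (hW : IsClopen W) (hxW : x ∈ W) :
    ∃ U : Set X, IsAdapted Φ U ∧ x ∈ U ∧ U ⊆ W :=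
  stmt1_general Φ hΦ x W hW hxW
end

section
/- Let (X,G,Φ) be a Cantor action and let U ⊆ X be an adapted clopen set. Let Ĥ_U denote the closure in C(U,U) (with the compact-open topology, equivalently uniform convergence) of the set {Φ(g)|_U : g ∈ G_U} of restrictions to U. Then Ĥ_U acts transitively on U: for all y, z ∈ U there exists ĥ ∈ Ĥ_U with ĥ(y) = z. -/
open Set Topology Filter

/-! By Arzelà–Ascoli, equicontinuity makes the closure `Ĥ_U` of the restricted maps compact in
`C(U,U)`, so its image under evaluation at `y` is closed. That image contains the points of the
`G`-orbit of `y` lying in `U` (a translate of `U` meeting `U` equals `U`), which are dense in the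
open set `U` by minimality; hence the image is all of `U`. -/

theorem ContinuousMap.isCompact_closure_of_equicontinuous {X α : Type*} [TopologicalSpace X]
    [CompactlyCoherentSpace X] [UniformSpace α] [CompactSpace α] [T2Space α] {S : Set C(X, α)}
    (hS : Equicontinuous ((↑) : S → X → α)) : IsCompact (closure S) :=
  haveI : T2Space (UniformOnFun X α {K : Set X | IsCompact K}) :=
    UniformOnFun.t2Space_of_covering <|
      sUnion_eq_univ_iff.mpr fun x ↦ ⟨{x}, isCompact_singleton, mem_singleton x⟩
  ArzelaAscoli.isCompact_closure_of_isClosedEmbedding (𝔖 := {K : Set X | IsCompact K})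
    (fun _ hK ↦ hK) ContinuousMap.isUniformEmbedding_toUniformOnFunIsCompact.isClosedEmbedding
    (fun K _ ↦ hS.equicontinuousOn K) fun _ _ _ _ ↦ ⟨univ, isCompact_univ, fun _ _ ↦ mem_univ _⟩

section RestrictedMaps

variable {X : Type*} [MetricSpace X] {G : Type*} {Φ : G → X ≃ₜ X} {U : Set X}

theorem exists_mem_restrictedMaps_of_image_eq {g : G} (hg : Φ g '' U = U) :
    ∃ u ∈ restrictedMaps Φ U, ∀ z : U, (u z : X) = Φ g z :=
  have hmaps : MapsTo (Φ g) U U := (mapsTo_image _ _).mono_right hg.subset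
  ⟨⟨hmaps.restrict _ _ _, (Φ g).continuous.restrict hmaps⟩, ⟨g, hg, fun _ ↦ rfl⟩, fun _ ↦ rfl⟩

theorem IsEquicontinuousAction.equicontinuous_restrictedMaps (hΦ : IsEquicontinuousAction Φ) :
    Equicontinuous ((↑) : restrictedMaps Φ U → U → U) := by
  refine UniformEquicontinuous.equicontinuous (Metric.uniformEquicontinuous_iff.mpr fun ε hε ↦ ?_)
  obtain ⟨δ, hδ, hδε⟩ := hΦ ε hε
  refine ⟨δ, hδ, fun x w hxw ⟨u, g, _, hgu⟩ ↦ ?_⟩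
  rw [Subtype.dist_eq, hgu x, hgu w]
  exact hδε g x w hxw

theorem IsMinimalAction.dense_eval_restrictedMaps (hΦ : IsMinimalAction Φ) (hUo : IsOpen U)
    (hUadapt : ∀ g : G, (Φ g '' U ∩ U).Nonempty → Φ g '' U = U) (y : U) :
    Dense ((fun u : C(U, U) ↦ u y) '' restrictedMaps Φ U) := by
  have horbit : U ∩ range (fun g : G ↦ Φ g y) ⊆
      (↑) '' ((fun u : C(U, U) ↦ u y) '' restrictedMaps Φ U) := by
    rintro _ ⟨hgyU, g, rfl⟩
    obtain ⟨u, hu, hgu⟩ := exists_mem_restrictedMaps_of_image_eq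
      (hUadapt g ⟨Φ g y, mem_image_of_mem _ y.2, hgyU⟩)
    exact ⟨u y, mem_image_of_mem _ hu, hgu y⟩
  exact Subtype.dense_iff.mpr <|
    ((hΦ y).open_subset_closure_inter hUo).trans (closure_mono horbit)

end RestrictedMaps

theorem stmt4_general {X : Type*} [MetricSpace X] [CompactSpace X]
    {G : Type*} [Group G] (Φ : G → X ≃ₜ X) (hΦ : IsCantorAction Φ)
    (U : Set X) (hU : IsAdapted Φ U) :
    ∀ y z : U, ∃ u ∈ closure (restrictedMaps Φ U), u y = z := by
  obtain ⟨-, hUclopen, hUadapt⟩ := hU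
  have : CompactSpace U := isCompact_iff_compactSpace.mp hUclopen.isClosed.isCompact
  intro y z
  have hcpt : IsCompact (closure (restrictedMaps Φ U)) :=
    ContinuousMap.isCompact_closure_of_equicontinuous hΦ.2.2.equicontinuous_restrictedMaps
  show z ∈ (fun u : C(U, U) ↦ u y) '' closure (restrictedMaps Φ U)
  rw [image_closure_of_isCompact hcpt (continuous_eval_const y).continuousOn,
    (hΦ.2.1.dense_eval_restrictedMaps hUclopen.isOpen hUadapt y).closure_eq]
  exact mem_univ z

/-- The closure `Ĥ_U` of the restricted holonomy in `C(U,U)` acts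
transitively on an adapted set `U`. -/
theorem stmt4 {X : Type*} [MetricSpace X] [CompactSpace X] [TotallyDisconnectedSpace X]
    [Nonempty X] (hX : Perfect (Set.univ : Set X))
    {G : Type*} [Group G] [Countable G] (Φ : G → X ≃ₜ X) (hΦ : IsCantorAction Φ)
    (U : Set X) (hU : IsAdapted Φ U) :
    ∀ y z : U, ∃ u ∈ closure (restrictedMaps Φ U), u y = z :=
  stmt4_general Φ hΦ U hU
end

section
/- Let (X,G,Φ) be a Cantor action and let U ⊆ X be an adapted clopen set. A continuous map u : U → U lies in the closure Ĥ_U of {Φ(g)|_U : g ∈ G_U} in C(U,U) (compact-open topology) if and only if there exists f ∈ G(Φ) with f(U) = U and f|_U = u. That is, Ĥ_U = { f|_U : f ∈ G(Φ), f(U) = U }. -/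
open Set Topology Filter

/-! The Ellis group `G(Φ)` is compact by Arzelà–Ascoli, and for compact `U` the condition
`f '' U = U` is closed in `C(X, X)`, so `{f ∈ G(Φ) | f '' U = U}` is compact. Adaptedness makes
it the closure of `{Φ g | Φ g '' U = U}`: a map close to `f` sends some point of `U` into `U`,
hence preserves `U`. Restriction to `U` is continuous, so it carries this compact set onto the
closure of the restrictions, which is `Ĥ_U`. -/

namespace ContinuousMap

variable {X Y : Type*} [TopologicalSpace X] [TopologicalSpace Y]

theorem isClosed_setOfPred_mem_image [LocallyCompactPair X Y] [T1Space Y] {K : Set X}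
    (hK : IsCompact K) (y : Y) : IsClosed {f : C(X, Y) | y ∈ f '' K} := by
  have := isCompact_iff_compactSpace.mp hK
  have hclosed : IsClosed {p : C(X, Y) × K | p.1 p.2 = y} :=
    isClosed_singleton.preimage
      (continuous_eval.comp (continuous_fst.prodMk (continuous_subtype_val.comp continuous_snd)))
  convert isClosedMap_fst_of_compactSpace _ hclosed using 1
  ext f
  simp

theorem isClosed_setOfPred_image_eq [LocallyCompactPair X Y] [T1Space Y] {K : Set X}
    (hK : IsCompact K) {V : Set Y} (hV : IsClosed V) :
    IsClosed {f : C(X, Y) | f '' K = V} := by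
  have : {f : C(X, Y) | f '' K = V} =
      {f : C(X, Y) | MapsTo f K V} ∩ ⋂ y ∈ V, {f : C(X, Y) | y ∈ f '' K} := by
    ext f
    simp only [mem_ofPred_eq, mem_inter_iff, mem_iInter, Subset.antisymm_iff,
      mapsTo_iff_image_subset]
    rfl
  rw [this]
  exact (isClosed_setOfPred_mapsTo hV K).inter
    (isClosed_biInter fun y _ => isClosed_setOfPred_mem_image hK y)

theorem isCompact_closure_range_of_equicontinuous [CompactlyCoherentSpace X] {ι α : Type*}
    [UniformSpace α] [CompactSpace α] [T2Space α] (F : ι → C(X, α))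
    (hF : Equicontinuous fun i => ⇑(F i)) : IsCompact (closure (range F)) := by
  have hclemb : IsClosedEmbedding (@toUniformOnFunIsCompact X α _ _) := by
    refine ⟨isUniformEmbedding_toUniformOnFunIsCompact.isEmbedding, ?_⟩
    rw [range_toUniformOnFunIsCompact]
    exact UniformOnFun.isClosed_setOfPred_continuous CompactlyCoherentSpace.isCoherentWith
  refine ArzelaAscoli.isCompact_closure_of_isClosedEmbedding (𝔖 := {K : Set X | IsCompact K})
    (F := DFunLike.coe) (fun K hK => hK) hclemb (fun K _ => ?_)
    fun K _ x _ => ⟨univ, isCompact_univ, fun _ _ => mem_univ _⟩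
  rw [← comp_rangeSplitting F]
  exact (hF.comp _).equicontinuousOn K

theorem mem_closure_iff_exists_restrict_eq [T2Space Y] {U : Set X} {V : Set Y}
    {T : Set C(X, Y)} (hT : IsCompact (closure T)) {A : Set C(U, V)}
    (hAT : ∀ u ∈ A, ∃ f ∈ T, ∀ z, (u z : Y) = f z)
    (hTA : ∀ f ∈ T, ∃ u ∈ A, ∀ z, (u z : Y) = f z) (u : C(U, V)) :
    u ∈ closure A ↔ ∃ f ∈ closure T, ∀ z, (u z : Y) = f z := by
  let ι : C(U, V) → C(U, Y) := (ContinuousMap.mk Subtype.val).comp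
  have hι : IsEmbedding ι := isEmbedding_postcomp _ .subtypeVal
  have hιR : ∀ (u : C(U, V)) (f : C(X, Y)), ι u = f.restrict U ↔ ∀ z, (u z : Y) = f z :=
    fun _ _ => ContinuousMap.ext_iff
  have himage : ι '' A = (restrict U) '' T := by
    ext w
    constructor
    · rintro ⟨u, hu, rfl⟩
      obtain ⟨f, hf, hfu⟩ := hAT u hu
      exact ⟨f, hf, ((hιR u f).mpr hfu).symm⟩
    · rintro ⟨f, hf, rfl⟩
      obtain ⟨u, hu, hfu⟩ := hTA f hf
      exact ⟨u, hu, (hιR u f).mpr hfu⟩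
  have hclosure : closure (restrict U '' T) = restrict U '' closure T :=
    ((hT.image (continuous_restrict U)).isClosed.closure_subset_iff.mpr
      (image_mono subset_closure)).antisymm
      (image_closure_subset_closure_image (continuous_restrict U))
  calc u ∈ closure A ↔ ι u ∈ closure (ι '' A) := by
        rw [hι.closure_eq_preimage_closure_image]; rfl
    _ ↔ ∃ f ∈ closure T, f.restrict U = ι u := by rw [himage, hclosure]; rfl
    _ ↔ ∃ f ∈ closure T, ∀ z, (u z : Y) = f z :=
        exists_congr fun f => and_congr_right fun _ => eq_comm.trans (hιR u f)

end ContinuousMap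

section CantorAction

variable {X : Type*} [MetricSpace X] {G : Type*} {Φ : G → X ≃ₜ X}

theorem IsEquicontinuousAction.equicontinuous (h : IsEquicontinuousAction Φ) :
    Equicontinuous fun g => ⇑(Φ g) :=
  (Metric.uniformEquicontinuous_iff.mpr fun ε hε =>
    (h ε hε).imp fun _ hδ => ⟨hδ.1, fun x y hxy g => hδ.2 g x y hxy⟩).equicontinuous

theorem IsEquicontinuousAction.isCompact_actionClosure [CompactSpace X]
    (h : IsEquicontinuousAction Φ) : IsCompact (actionClosure Φ) :=
  ContinuousMap.isCompact_closure_range_of_equicontinuous _ h.equicontinuous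

theorem IsAdapted.closure_image_setOf_image_eq [CompactSpace X] {U : Set X}
    (hU : IsAdapted Φ U) :
    closure ((fun g => (Φ g : C(X, X))) '' {g | Φ g '' U = U}) =
      {f ∈ actionClosure Φ | f '' U = U} := by
  obtain ⟨⟨x, hx⟩, hUclopen, hUadapted⟩ := hU
  refine closure_minimal ?_ ?_ |>.antisymm ?_
  · rintro _ ⟨g, hg, rfl⟩
    exact ⟨subset_closure (mem_range_self g), hg⟩
  · exact isClosed_closure.inter (ContinuousMap.isClosed_setOfPred_image_eq
      hUclopen.isClosed.isCompact hUclopen.isClosed)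
  · rintro f ⟨hf, hfU⟩
    let W : Set C(X, X) := {h | h x ∈ U}
    have hW : IsOpen W := hUclopen.isOpen.preimage (continuous_eval_const x)
    have hfW : f ∈ W := hfU.subset (mem_image_of_mem f hx)
    have hWT : W ∩ range (fun g => (Φ g : C(X, X))) ⊆
        (fun g => (Φ g : C(X, X))) '' {g | Φ g '' U = U} := by
      rintro _ ⟨hgx, g, rfl⟩
      exact ⟨g, hUadapted g ⟨Φ g x, mem_image_of_mem _ hx, hgx⟩, rfl⟩
    exact closure_mono hWT (hW.inter_closure ⟨hfW, hf⟩)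

end CantorAction

theorem stmt5_general {X : Type*} [MetricSpace X] [CompactSpace X]
    {G : Type*} [Group G] (Φ : G → X ≃ₜ X) (hΦ : IsCantorAction Φ)
    (U : Set X) (hU : IsAdapted Φ U) :
    ∀ u : C(U, U), u ∈ closure (restrictedMaps Φ U) ↔
      ∃ f ∈ actionClosure Φ, ⇑f '' U = U ∧ ∀ z : U, (u z : X) = f (z : X) := by
  intro u
  let T : Set C(X, X) := (fun g => (Φ g : C(X, X))) '' {g | Φ g '' U = U}
  have hT : IsCompact (closure T) :=
    hΦ.2.2.isCompact_actionClosure.of_isClosed_subset isClosed_closure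
      (closure_mono (image_subset_range _ _))
  have hAT : ∀ v ∈ restrictedMaps Φ U, ∃ f ∈ T, ∀ z, (v z : X) = f z :=
    fun v ⟨g, hg, hv⟩ => ⟨Φ g, ⟨g, hg, rfl⟩, hv⟩
  have hTA : ∀ f ∈ T, ∃ v ∈ restrictedMaps Φ U, ∀ z, (v z : X) = f z := by
    rintro _ ⟨g, hg, rfl⟩
    exact ⟨⟨fun z => ⟨Φ g z, hg.subset (mem_image_of_mem _ z.2)⟩, by fun_prop⟩,
      ⟨g, hg, fun _ => rfl⟩, fun _ => rfl⟩
  rw [ContinuousMap.mem_closure_iff_exists_restrict_eq hT hAT hTA,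
    hU.closure_image_setOf_image_eq]
  simp only [mem_sep_iff, and_assoc]

/-- `Ĥ_U` consists exactly of the restrictions to `U` of the elements of
the Ellis group `G(Φ)` preserving `U`. -/
theorem stmt5 {X : Type*} [MetricSpace X] [CompactSpace X] [TotallyDisconnectedSpace X]
    [Nonempty X] (hX : Perfect (Set.univ : Set X))
    {G : Type*} [Group G] [Countable G] (Φ : G → X ≃ₜ X) (hΦ : IsCantorAction Φ)
    (U : Set X) (hU : IsAdapted Φ U) :
    ∀ u : C(U, U), u ∈ closure (restrictedMaps Φ U) ↔
      ∃ f ∈ actionClosure Φ, ⇑f '' U = U ∧ ∀ z : U, (u z : X) = f (z : X) :=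
  stmt5_general Φ hΦ U hU
end

section
/- Let G be a countable group and let {G_ℓ} and {H_ℓ} be group chains in G with G_0 = H_0 = G, with associated inverse limit G-spaces X_∞ = lim← G/G_ℓ and Y_∞ = lim← G/H_ℓ. Then: (a) the chains {G_ℓ} and {H_ℓ} are equivalent if and only if there exists a G-equivariant homeomorphism τ : X_∞ → Y_∞ with τ((eG_ℓ)_ℓ) = (eH_ℓ)_ℓ; and (b) the chains {G_ℓ} and {H_ℓ} are conjugate equivalent if and only if there exists a G-equivariant homeomorphism τ : X_∞ → Y_∞. -/
/-! A basepoint-preserving equivariant homeomorphism `τ` is continuous at the basepoint, whose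
`ℓ`-th coordinate has stabilizer `G_ℓ`; so every `H_j` contains some `G_ℓ`, and symmetrically.
Mutual cofinality of two chains is the same as being interlaced, and conversely it lets one
define `τ` coordinatewise by the projections `G/G_{ℓ(j)} → G/H_j`. For an arbitrary `τ`, write
`τ⁻¹` of the basepoint as `(g_ℓ G_ℓ)_ℓ`: right translation `x G_ℓ ↦ x g_ℓ⁻¹ (g_ℓ G_ℓ g_ℓ⁻¹)`
identifies `X_∞` with the inverse limit of the conjugate chain and moves that point to the
basepoint, which reduces conjugate equivalence to equivalence. -/

open Set Topology Filter

section

variable {G : Type*} [Group G]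

section GroupChains

def ChainRefines (C D : ℕ → Subgroup G) : Prop :=
  ∀ j, ∃ ℓ, C ℓ ≤ D j

variable {C D K : ℕ → Subgroup G}

theorem isGroupChain_iff :
    IsGroupChain K ↔ K 0 = ⊤ ∧ Antitone K ∧ ∀ ℓ, (K ℓ).index ≠ 0 := by
  constructor
  · rintro ⟨h0, hK⟩
    refine ⟨h0, antitone_nat_of_succ_le fun ℓ => (hK ℓ).1, fun ℓ => ?_⟩
    induction ℓ with
    | zero => simp [h0]
    | succ n ih =>
      rw [← Subgroup.relIndex_mul_index (hK n).1]
      exact mul_ne_zero (hK n).2 ih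
  · rintro ⟨h0, hK, hi⟩
    exact ⟨h0, fun ℓ => ⟨hK ℓ.le_succ,
      fun h => hi (ℓ + 1) (Subgroup.index_eq_zero_of_relIndex_eq_zero h)⟩⟩

theorem IsGroupChain.antitone (hK : IsGroupChain K) : Antitone K :=
  (isGroupChain_iff.mp hK).2.1

theorem ChainRefines.exists_lt (hC : Antitone C) (h : ChainRefines C D) :
    ∃ f : ℕ → ℕ, ∀ j, j < f j ∧ C (f j) ≤ D j := by
  choose f hf using h
  exact ⟨fun j => max (f j) (j + 1), fun j =>
    ⟨lt_max_of_lt_right j.lt_succ_self, (hC (le_max_left _ _)).trans (hf j)⟩⟩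

theorem ChainsEquivalent.chainRefines (hC : Antitone C) (hD : Antitone D)
    (h : ChainsEquivalent C D) : ChainRefines C D ∧ ChainRefines D C := by
  obtain ⟨K, hK, ls, js, hls, hjs, hKCD⟩ := h
  refine ⟨fun j => ⟨ls (j + 1), ?_⟩, fun ℓ => ⟨js ℓ, ?_⟩⟩
  · calc C (ls (j + 1)) = K (2 * (j + 1)) := (hKCD _).1.symm
      _ ≤ K (2 * j + 1) := hK.antitone (by omega)
      _ = D (js j) := (hKCD j).2
      _ ≤ D j := hD hjs.le_apply
  · calc D (js ℓ) = K (2 * ℓ + 1) := (hKCD ℓ).2.symm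
      _ ≤ K (2 * ℓ) := hK.antitone (by omega)
      _ = C (ls ℓ) := (hKCD ℓ).1
      _ ≤ C ℓ := hC hls.le_apply

/-- With `n := interlaceIndex f g`, the interlaced chain is `C (n 0) ⊇ D (n 1) ⊇ C (n 2) ⊇ ⋯`,
given `D (g ℓ) ≤ C ℓ` and `C (f j) ≤ D j`. -/
def interlaceIndex (f g : ℕ → ℕ) : ℕ → ℕ
  | 0 => 0
  | m + 1 => if Even m then g (interlaceIndex f g m) else f (interlaceIndex f g m)

theorem chainsEquivalent_of_chainRefines (hC : IsGroupChain C) (hD : IsGroupChain D)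
    (hCD : ChainRefines C D) (hDC : ChainRefines D C) : ChainsEquivalent C D := by
  obtain ⟨hC0, hCa, hCi⟩ := isGroupChain_iff.mp hC
  obtain ⟨-, hDa, hDi⟩ := isGroupChain_iff.mp hD
  obtain ⟨f, hf⟩ := hCD.exists_lt hCa
  obtain ⟨g, hg⟩ := hDC.exists_lt hDa
  set n := interlaceIndex f g
  have hn_succ (m : ℕ) : n (m + 1) = if Even m then g (n m) else f (n m) := rfl
  have hn : StrictMono n := strictMono_nat_of_lt_succ fun m => by
    rw [hn_succ]; split_ifs
    exacts [(hg _).1, (hf _).1]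
  let K m := if Even m then C (n m) else D (n m)
  have hK_even (k : ℕ) : K (2 * k) = C (n (2 * k)) := if_pos (even_two_mul k)
  have hK_odd (k : ℕ) : K (2 * k + 1) = D (n (2 * k + 1)) :=
    if_neg (Nat.not_even_two_mul_add_one k)
  have hK_succ (m : ℕ) : K (m + 1) ≤ K m := by
    simp only [K, hn_succ, Nat.even_add_one]
    split_ifs
    exacts [(hg _).2, (hf _).2]
  refine ⟨K, isGroupChain_iff.mpr ⟨?_, antitone_nat_of_succ_le hK_succ, fun m => ?_⟩,
    fun k => n (2 * k), fun k => n (2 * k + 1), fun _ _ h => hn (by omega),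
    fun _ _ h => hn (by omega), fun k => ⟨hK_even k, hK_odd k⟩⟩
  · exact (hK_even 0).trans hC0
  · simp only [K]; split_ifs
    exacts [hCi _, hDi _]

theorem chainsEquivalent_iff_chainRefines (hC : IsGroupChain C) (hD : IsGroupChain D) :
    ChainsEquivalent C D ↔ ChainRefines C D ∧ ChainRefines D C :=
  ⟨ChainsEquivalent.chainRefines hC.antitone hD.antitone,
    fun h => chainsEquivalent_of_chainRefines hC hD h.1 h.2⟩

end GroupChains

section Conjugation

variable {C : ℕ → Subgroup G}

theorem mem_conjSubgroup_iff {g x : G} {H : Subgroup G} :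
    x ∈ conjSubgroup g H ↔ g⁻¹ * x * g ∈ H := by
  rw [conjSubgroup, Subgroup.mem_map_equiv, MulAut.conj_symm_apply]

theorem index_conjSubgroup (g : G) (H : Subgroup G) : (conjSubgroup g H).index = H.index :=
  Subgroup.index_map_equiv H (MulAut.conj g)

theorem conjSubgroup_top (g : G) : conjSubgroup g ⊤ = ⊤ :=
  Subgroup.map_top_of_surjective _ (MulAut.conj g).surjective

theorem conjSubgroup_le_conjSubgroup {g g' : G} {H H' : Subgroup G} (hH : H' ≤ H)
    (hg : g⁻¹ * g' ∈ H) : conjSubgroup g' H' ≤ conjSubgroup g H := fun x hx => by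
  rw [mem_conjSubgroup_iff] at hx ⊢
  have e : g⁻¹ * x * g = g⁻¹ * g' * (g'⁻¹ * x * g') * (g⁻¹ * g')⁻¹ := by group
  rw [e]
  exact H.mul_mem (H.mul_mem hg (hH hx)) (H.inv_mem hg)

theorem IsGroupChain.conj (hC : IsGroupChain C) {gs : ℕ → G}
    (hgs : ∀ ℓ, (gs ℓ)⁻¹ * gs (ℓ + 1) ∈ C ℓ) :
    IsGroupChain fun ℓ => conjSubgroup (gs ℓ) (C ℓ) := by
  obtain ⟨h0, hCa, hCi⟩ := isGroupChain_iff.mp hC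
  refine isGroupChain_iff.mpr ⟨?_, antitone_nat_of_succ_le fun ℓ =>
    conjSubgroup_le_conjSubgroup (hCa ℓ.le_succ) (hgs ℓ), fun ℓ => ?_⟩
  · rw [h0, conjSubgroup_top]
  · rw [index_conjSubgroup]
    exact hCi ℓ

def conjQuotientEquiv (g : G) (H : Subgroup G) : G ⧸ H ≃ G ⧸ conjSubgroup g H where
  toFun := Quotient.map' (· * g⁻¹) fun a b hab => by
    rw [QuotientGroup.leftRel_apply, mem_conjSubgroup_iff] at *
    simpa [mul_assoc] using hab
  invFun := Quotient.map' (· * g) fun a b hab => by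
    rw [QuotientGroup.leftRel_apply, mem_conjSubgroup_iff] at *
    simpa [mul_assoc] using hab
  left_inv x := by
    induction x using QuotientGroup.induction_on with
    | H a => exact congrArg _ (inv_mul_cancel_right a g)
  right_inv x := by
    induction x using QuotientGroup.induction_on with
    | H a => exact congrArg _ (mul_inv_cancel_right a g)

theorem conjQuotientEquiv_smul (g : G) (H : Subgroup G) (a : G) (x : G ⧸ H) :
    conjQuotientEquiv g H (a • x) = a • conjQuotientEquiv g H x := by
  induction x using QuotientGroup.induction_on with
  | H b => exact congrArg _ (mul_assoc a b g⁻¹)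

end Conjugation

namespace ChainLimit

variable {C D E : ℕ → Subgroup G} {gs : ℕ → G}

instance : TopologicalSpace (chainLimitSet C) := chainLimitTop C

instance : SMul G (chainLimitSet C) :=
  ⟨fun g σ => ⟨fun ℓ => g • σ.1 ℓ, smul_mem_chainLimitSet g σ.2⟩⟩

def IsEquivariantHomeomorph (τ : chainLimitSet C ≃ chainLimitSet D) : Prop :=
  Continuous τ ∧ Continuous τ.symm ∧ ∀ (g : G) (σ : chainLimitSet C), τ (g • σ) = g • τ σ

theorem IsEquivariantHomeomorph.symm {τ : chainLimitSet C ≃ chainLimitSet D}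
    (hτ : IsEquivariantHomeomorph τ) : IsEquivariantHomeomorph τ.symm :=
  ⟨hτ.2.1, hτ.1, fun g σ => τ.injective (by rw [hτ.2.2, τ.apply_symm_apply, τ.apply_symm_apply])⟩

theorem IsEquivariantHomeomorph.trans {τ : chainLimitSet C ≃ chainLimitSet D}
    {τ' : chainLimitSet D ≃ chainLimitSet E} (hτ : IsEquivariantHomeomorph τ)
    (hτ' : IsEquivariantHomeomorph τ') : IsEquivariantHomeomorph (τ.trans τ') :=
  ⟨hτ'.1.comp hτ.1, hτ.2.1.comp hτ'.2.1, fun g σ => by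
    simp only [Equiv.trans_apply, hτ.2.2, hτ'.2.2]⟩

theorem apply_eq_mk_of_le (hC : Antitone C) {σ : ∀ ℓ, G ⧸ C ℓ} (hσ : σ ∈ chainLimitSet C)
    {i m : ℕ} (him : i ≤ m) {g : G} (hg : σ m = g) : σ i = g := by
  induction m, him using Nat.le_induction generalizing g with
  | base => exact hg
  | succ n _ ih =>
    obtain ⟨k, hk, hk'⟩ := hσ n
    refine ih (hk.trans (QuotientGroup.eq.mpr ?_))
    exact hC n.le_succ (QuotientGroup.eq.mp (hk'.symm.trans hg))

theorem apply_eq_of_le (hC : Antitone C) (σ σ' : chainLimitSet C) {i m : ℕ} (him : i ≤ m)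
    (h : σ.1 m = σ'.1 m) : σ.1 i = σ'.1 i := by
  obtain ⟨g, hg⟩ := QuotientGroup.mk_surjective (σ.1 m)
  rw [apply_eq_mk_of_le hC σ.2 him hg.symm, apply_eq_mk_of_le hC σ'.2 him (h ▸ hg.symm)]

theorem isLocallyConstant_apply (ℓ : ℕ) :
    IsLocallyConstant fun σ : chainLimitSet C => σ.1 ℓ := by
  let _ : ∀ i, TopologicalSpace (G ⧸ C i) := fun _ => ⊥
  have : DiscreteTopology (G ⧸ C ℓ) := ⟨rfl⟩
  exact (IsLocallyConstant.iff_continuous _).mpr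
    ((continuous_apply ℓ).comp continuous_induced_dom)

theorem continuous_of_apply_eq {f : chainLimitSet C → chainLimitSet D} (F : ℕ → ℕ)
    (φ : ∀ ℓ, G ⧸ C (F ℓ) → G ⧸ D ℓ) (hf : ∀ σ ℓ, (f σ).1 ℓ = φ ℓ (σ.1 (F ℓ))) :
    Continuous f := by
  let _ : ∀ ℓ, TopologicalSpace (G ⧸ D ℓ) := fun _ => ⊥
  refine continuous_induced_rng.mpr (continuous_pi fun ℓ => ?_)
  simpa only [Function.comp_def, hf] using ((isLocallyConstant_apply (F ℓ)).comp (φ ℓ)).continuous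

theorem exists_apply_eq_subset_of_mem_nhds (hC : Antitone C) {σ : chainLimitSet C}
    {s : Set (chainLimitSet C)} (hs : s ∈ 𝓝 σ) : ∃ n, {σ' | σ'.1 n = σ.1 n} ⊆ s := by
  let _ : ∀ ℓ, TopologicalSpace (G ⧸ C ℓ) := fun _ => ⊥
  have : ∀ ℓ, DiscreteTopology (G ⧸ C ℓ) := fun _ => ⟨rfl⟩
  obtain ⟨t, ht, hts⟩ := (nhds_induced Subtype.val σ ▸ hs : s ∈ comap Subtype.val (𝓝 σ.1))
  rw [nhds_pi] at ht
  obtain ⟨I, u, hu, hIu⟩ := Filter.mem_pi'.mp ht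
  refine ⟨I.sup id, fun σ' hσ' => hts (hIu fun i hi => ?_)⟩
  rw [apply_eq_of_le hC σ' σ (i := i) (Finset.le_sup (f := id) hi) hσ']
  exact mem_of_mem_nhds (hu i)

theorem smul_basepoint_apply_eq_iff {x : G} {ℓ : ℕ} :
    (x • chainBasepoint C).1 ℓ = (chainBasepoint C).1 ℓ ↔ x ∈ C ℓ := by
  change ((x * 1 : G) : G ⧸ C ℓ) = ((1 : G) : G ⧸ C ℓ) ↔ _
  rw [QuotientGroup.eq, mul_one, mul_one, inv_mem_iff]

theorem chainRefines_of_continuous_of_equivariant (hC : Antitone C)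
    {f : chainLimitSet C → chainLimitSet D} (hf : Continuous f)
    (hequiv : ∀ (g : G) (σ : chainLimitSet C), f (g • σ) = g • f σ)
    (hbase : f (chainBasepoint C) = chainBasepoint D) : ChainRefines C D := by
  intro j
  obtain ⟨n, hn⟩ := exists_apply_eq_subset_of_mem_nhds hC
    (((isLocallyConstant_apply j).comp_continuous hf).eventually_eq (chainBasepoint C))
  refine ⟨n, fun x hx => ?_⟩
  have hfx : (f (x • chainBasepoint C)).1 j = (f (chainBasepoint C)).1 j :=
    hn (smul_basepoint_apply_eq_iff.mpr hx)
  rwa [hequiv, hbase, smul_basepoint_apply_eq_iff] at hfx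

theorem quotientMapOfLE_smul {H K : Subgroup G} (h : H ≤ K) (g : G) (x : G ⧸ H) :
    Subgroup.quotientMapOfLE h (g • x) = g • Subgroup.quotientMapOfLE h x := by
  induction x using QuotientGroup.induction_on with
  | H a => rfl

def limitMap (hC : Antitone C) {F : ℕ → ℕ} (hF : ∀ ℓ, C (F ℓ) ≤ D ℓ)
    (σ : chainLimitSet C) : chainLimitSet D :=
  ⟨fun ℓ => Subgroup.quotientMapOfLE (hF ℓ) (σ.1 (F ℓ)), fun ℓ => by
    obtain ⟨g, hg⟩ := QuotientGroup.mk_surjective (σ.1 (max (F ℓ) (F (ℓ + 1))))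
    refine ⟨g, ?_, ?_⟩
    all_goals dsimp only
    · rw [apply_eq_mk_of_le hC σ.2 (le_max_left _ _) hg.symm]; rfl
    · rw [apply_eq_mk_of_le hC σ.2 (le_max_right _ _) hg.symm]; rfl⟩

theorem limitMap_limitMap (hC : Antitone C) (hD : Antitone D) {F F' : ℕ → ℕ}
    (hF : ∀ ℓ, C (F ℓ) ≤ D ℓ) (hF' : ∀ ℓ, D (F' ℓ) ≤ C ℓ) (σ : chainLimitSet C) :
    limitMap hD hF' (limitMap hC hF σ) = σ := by
  refine Subtype.ext (funext fun ℓ => ?_)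
  obtain ⟨g, hg⟩ := QuotientGroup.mk_surjective (σ.1 (max ℓ (F (F' ℓ))))
  change Subgroup.quotientMapOfLE (hF' ℓ)
    (Subgroup.quotientMapOfLE (hF (F' ℓ)) (σ.1 (F (F' ℓ)))) = σ.1 ℓ
  rw [apply_eq_mk_of_le hC σ.2 (le_max_right _ _) hg.symm,
    apply_eq_mk_of_le hC σ.2 (le_max_left _ _) hg.symm]
  rfl

def limitEquiv (hC : Antitone C) (hD : Antitone D) {F F' : ℕ → ℕ}
    (hF : ∀ ℓ, C (F ℓ) ≤ D ℓ) (hF' : ∀ ℓ, D (F' ℓ) ≤ C ℓ) :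
    chainLimitSet C ≃ chainLimitSet D where
  toFun := limitMap hC hF
  invFun := limitMap hD hF'
  left_inv := limitMap_limitMap hC hD hF hF'
  right_inv := limitMap_limitMap hD hC hF' hF

theorem isEquivariantHomeomorph_limitEquiv (hC : Antitone C) (hD : Antitone D)
    {F F' : ℕ → ℕ} (hF : ∀ ℓ, C (F ℓ) ≤ D ℓ) (hF' : ∀ ℓ, D (F' ℓ) ≤ C ℓ) :
    IsEquivariantHomeomorph (limitEquiv hC hD hF hF') :=
  ⟨continuous_of_apply_eq F _ fun _ _ => rfl, continuous_of_apply_eq F' _ fun _ _ => rfl,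
    fun g _ => Subtype.ext <| funext fun ℓ => quotientMapOfLE_smul (hF ℓ) g _⟩

theorem exists_isEquivariantHomeomorph_basepoint_iff (hC : Antitone C) (hD : Antitone D) :
    (∃ τ : chainLimitSet C ≃ chainLimitSet D,
      IsEquivariantHomeomorph τ ∧ τ (chainBasepoint C) = chainBasepoint D) ↔
      ChainRefines C D ∧ ChainRefines D C := by
  constructor
  · rintro ⟨τ, hτ, hbase⟩
    exact ⟨chainRefines_of_continuous_of_equivariant hC hτ.1 hτ.2.2 hbase,
      chainRefines_of_continuous_of_equivariant hD hτ.symm.1 hτ.symm.2.2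
        (τ.symm_apply_eq.mpr hbase.symm)⟩
  · rintro ⟨hCD, hDC⟩
    choose F hF using hCD
    choose F' hF' using hDC
    exact ⟨limitEquiv hC hD hF hF', isEquivariantHomeomorph_limitEquiv hC hD hF hF', rfl⟩

def translateEquiv (hgs : ∀ ℓ, (gs ℓ)⁻¹ * gs (ℓ + 1) ∈ C ℓ) :
    chainLimitSet C ≃ chainLimitSet fun ℓ => conjSubgroup (gs ℓ) (C ℓ) where
  toFun σ := ⟨fun ℓ => conjQuotientEquiv (gs ℓ) (C ℓ) (σ.1 ℓ), fun ℓ => by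
    obtain ⟨k, hk, hk'⟩ := σ.2 ℓ
    refine ⟨k * (gs (ℓ + 1))⁻¹, ?_, by dsimp only; rw [hk']; rfl⟩
    dsimp only
    rw [hk]
    refine QuotientGroup.eq.mpr (mem_conjSubgroup_iff.mpr ?_)
    simpa [mul_assoc] using (C ℓ).inv_mem (hgs ℓ)⟩
  invFun σ := ⟨fun ℓ => (conjQuotientEquiv (gs ℓ) (C ℓ)).symm (σ.1 ℓ), fun ℓ => by
    obtain ⟨k, hk, hk'⟩ := σ.2 ℓ
    refine ⟨k * gs (ℓ + 1), ?_, by dsimp only; rw [hk']; rfl⟩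
    dsimp only
    rw [hk]
    refine QuotientGroup.eq.mpr ?_
    simpa [mul_assoc] using hgs ℓ⟩
  left_inv σ := Subtype.ext <| funext fun ℓ => (conjQuotientEquiv _ _).symm_apply_apply _
  right_inv σ := Subtype.ext <| funext fun ℓ => (conjQuotientEquiv _ _).apply_symm_apply _

theorem isEquivariantHomeomorph_translateEquiv (hgs : ∀ ℓ, (gs ℓ)⁻¹ * gs (ℓ + 1) ∈ C ℓ) :
    IsEquivariantHomeomorph (translateEquiv hgs) :=
  ⟨continuous_of_apply_eq id _ fun _ _ => rfl, continuous_of_apply_eq id _ fun _ _ => rfl,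
    fun g _ => Subtype.ext <| funext fun ℓ => conjQuotientEquiv_smul (gs ℓ) (C ℓ) g _⟩

theorem translateEquiv_eq_basepoint (hgs : ∀ ℓ, (gs ℓ)⁻¹ * gs (ℓ + 1) ∈ C ℓ)
    {σ : chainLimitSet C} (hσ : ∀ ℓ, σ.1 ℓ = gs ℓ) :
    translateEquiv hgs σ = chainBasepoint _ :=
  Subtype.ext <| funext fun ℓ => by
    change conjQuotientEquiv _ _ (σ.1 ℓ) = _
    rw [hσ]
    exact congrArg _ (mul_inv_cancel (gs ℓ))

theorem exists_compatible_reps (hC : Antitone C) (σ : chainLimitSet C) :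
    ∃ gs : ℕ → G, (∀ ℓ, σ.1 ℓ = gs ℓ) ∧ ∀ ℓ, (gs ℓ)⁻¹ * gs (ℓ + 1) ∈ C ℓ := by
  choose gs hgs using fun ℓ => QuotientGroup.mk_surjective (σ.1 ℓ)
  refine ⟨gs, fun ℓ => (hgs ℓ).symm, fun ℓ => QuotientGroup.eq.mp ?_⟩
  rw [hgs ℓ]
  exact apply_eq_mk_of_le hC σ.2 ℓ.le_succ (hgs (ℓ + 1)).symm

theorem chainsEquivalent_iff_exists_basepoint (hC : IsGroupChain C) (hD : IsGroupChain D) :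
    ChainsEquivalent C D ↔ ∃ τ : chainLimitSet C ≃ chainLimitSet D,
      IsEquivariantHomeomorph τ ∧ τ (chainBasepoint C) = chainBasepoint D :=
  (chainsEquivalent_iff_chainRefines hC hD).trans
    (exists_isEquivariantHomeomorph_basepoint_iff hC.antitone hD.antitone).symm

theorem chainsConjugateEquivalent_iff (hC : IsGroupChain C) (hD : IsGroupChain D) :
    ChainsConjugateEquivalent C D ↔
      ∃ τ : chainLimitSet C ≃ chainLimitSet D, IsEquivariantHomeomorph τ := by
  constructor
  · rintro ⟨gs, hgs, h⟩
    obtain ⟨τ, hτ, -⟩ := (chainsEquivalent_iff_exists_basepoint (hC.conj hgs) hD).mp h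
    exact ⟨_, (isEquivariantHomeomorph_translateEquiv hgs).trans hτ⟩
  · rintro ⟨τ, hτ⟩
    obtain ⟨gs, hrep, hgs⟩ := exists_compatible_reps hC.antitone (τ.symm (chainBasepoint D))
    refine ⟨gs, hgs, (chainsEquivalent_iff_exists_basepoint (hC.conj hgs) hD).mpr
      ⟨(translateEquiv hgs).symm.trans τ,
        (isEquivariantHomeomorph_translateEquiv hgs).symm.trans hτ, ?_⟩⟩
    rw [Equiv.trans_apply, ← translateEquiv_eq_basepoint hgs hrep, Equiv.symm_apply_apply,
      Equiv.apply_symm_apply]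

end ChainLimit

end

theorem stmt8_general {G : Type*} [Group G] (Gc Hc : ℕ → Subgroup G)
    (hGc : IsGroupChain Gc) (hHc : IsGroupChain Hc) :
    (ChainsEquivalent Gc Hc ↔
      ∃ τ : chainLimitSet Gc ≃ chainLimitSet Hc,
        @Continuous _ _ (chainLimitTop Gc) (chainLimitTop Hc) τ ∧
        @Continuous _ _ (chainLimitTop Hc) (chainLimitTop Gc) τ.symm ∧
        (∀ (g : G) (σ : chainLimitSet Gc),
          τ ⟨fun ℓ => g • (σ : ∀ ℓ : ℕ, G ⧸ Gc ℓ) ℓ, smul_mem_chainLimitSet g σ.2⟩ =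
            ⟨fun ℓ => g • ((τ σ : ∀ ℓ : ℕ, G ⧸ Hc ℓ)) ℓ,
              smul_mem_chainLimitSet g (τ σ).2⟩) ∧
        τ (chainBasepoint Gc) = chainBasepoint Hc) ∧
    (ChainsConjugateEquivalent Gc Hc ↔
      ∃ τ : chainLimitSet Gc ≃ chainLimitSet Hc,
        @Continuous _ _ (chainLimitTop Gc) (chainLimitTop Hc) τ ∧
        @Continuous _ _ (chainLimitTop Hc) (chainLimitTop Gc) τ.symm ∧
        ∀ (g : G) (σ : chainLimitSet Gc),
          τ ⟨fun ℓ => g • (σ : ∀ ℓ : ℕ, G ⧸ Gc ℓ) ℓ, smul_mem_chainLimitSet g σ.2⟩ =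
            ⟨fun ℓ => g • ((τ σ : ∀ ℓ : ℕ, G ⧸ Hc ℓ)) ℓ,
              smul_mem_chainLimitSet g (τ σ).2⟩) :=
  ⟨(ChainLimit.chainsEquivalent_iff_exists_basepoint hGc hHc).trans
      (exists_congr fun _ => by
        rw [ChainLimit.IsEquivariantHomeomorph, and_assoc, and_assoc]; rfl),
    ChainLimit.chainsConjugateEquivalent_iff hGc hHc⟩

/-- Equivalence (resp. conjugate equivalence) of group chains corresponds
to basepoint-preserving (resp. arbitrary) equivariant homeomorphism of the inverse limit
`G`-spaces. -/
theorem stmt8 {G : Type*} [Group G] [Countable G] (Gc Hc : ℕ → Subgroup G)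
    (hGc : IsGroupChain Gc) (hHc : IsGroupChain Hc) :
    (ChainsEquivalent Gc Hc ↔
      ∃ τ : chainLimitSet Gc ≃ chainLimitSet Hc,
        @Continuous _ _ (chainLimitTop Gc) (chainLimitTop Hc) τ ∧
        @Continuous _ _ (chainLimitTop Hc) (chainLimitTop Gc) τ.symm ∧
        (∀ (g : G) (σ : chainLimitSet Gc),
          τ ⟨fun ℓ => g • (σ : ∀ ℓ : ℕ, G ⧸ Gc ℓ) ℓ, smul_mem_chainLimitSet g σ.2⟩ =
            ⟨fun ℓ => g • ((τ σ : ∀ ℓ : ℕ, G ⧸ Hc ℓ)) ℓ,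
              smul_mem_chainLimitSet g (τ σ).2⟩) ∧
        τ (chainBasepoint Gc) = chainBasepoint Hc) ∧
    (ChainsConjugateEquivalent Gc Hc ↔
      ∃ τ : chainLimitSet Gc ≃ chainLimitSet Hc,
        @Continuous _ _ (chainLimitTop Gc) (chainLimitTop Hc) τ ∧
        @Continuous _ _ (chainLimitTop Hc) (chainLimitTop Gc) τ.symm ∧
        ∀ (g : G) (σ : chainLimitSet Gc),
          τ ⟨fun ℓ => g • (σ : ∀ ℓ : ℕ, G ⧸ Gc ℓ) ℓ, smul_mem_chainLimitSet g σ.2⟩ =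
            ⟨fun ℓ => g • ((τ σ : ∀ ℓ : ℕ, G ⧸ Hc ℓ)) ℓ,
              smul_mem_chainLimitSet g (τ σ).2⟩) :=
  stmt8_general Gc Hc hGc hHc
end

section
/- Let (X,G,Φ) be a Cantor action, let {U_ℓ} be an adapted neighborhood basis at x ∈ X with group chain G_ℓ = G_{U_ℓ}, and fix ℓ ≥ 0. If f ∈ G(Φ) satisfies f(x) = x and f ∘ Φ(g) = Φ(g) ∘ f for all g ∈ G_ℓ, then f(z) = z for all z ∈ U_ℓ. (That is, the ℓ-th centralizer group Z_ℓ is contained in the ℓ-th stabilizer group K_ℓ.) -/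
open Set Topology Filter

section AdaptedSets

variable {X : Type*} [MetricSpace X] {G : Type*} {Φ : G → X ≃ₜ X} {U : Set X}

theorem IsAdapted.image_eq_of_mem (hU : IsAdapted Φ U) {x : X} (hx : x ∈ U) {g : G}
    (hgx : Φ g x ∈ U) : Φ g '' U = U :=
  hU.2.2 g ⟨Φ g x, mem_image_of_mem _ hx, hgx⟩

/-- By minimality the orbit of `x` is dense in the open set `U`, and every orbit point in `U`
is `Φ g x` with `g` in the stabilizer of `U`, hence fixed by `f`. -/
theorem IsAdapted.eqOn_id_of_commute (hmin : IsMinimalAction Φ) (hU : IsAdapted Φ U)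
    {x : X} (hx : x ∈ U) {f : C(X, X)} (hfx : f x = x)
    (hcomm : ∀ g : G, Φ g '' U = U → f (Φ g x) = Φ g (f x)) :
    EqOn f id U := by
  have horbit : EqOn f id (U ∩ range fun g : G => Φ g x) := by
    rintro _ ⟨hgx, g, rfl⟩
    rw [hcomm g (hU.image_eq_of_mem hx hgx), hfx, id]
  exact horbit.of_subset_closure f.continuous.continuousOn continuousOn_id inter_subset_left
    ((hmin x).open_subset_closure_inter hU.2.1.isOpen)

end AdaptedSets

theorem stmt10_general {X : Type*} [MetricSpace X]
    {G : Type*} [Group G] (Φ : G → X ≃ₜ X) (hΦ : IsCantorAction Φ)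
    (x : X) (U : ℕ → Set X) (hU : IsAdaptedBasis Φ x U) (ℓ : ℕ)
    (f : C(X, X)) (hfx : f x = x)
    (hcomm : ∀ g : G, Φ g '' U ℓ = U ℓ → ∀ z : X, f (Φ g z) = Φ g (f z)) :
    ∀ z ∈ U ℓ, f z = z := by
  obtain ⟨-, hadapted, hxU, -, -⟩ := hU
  exact (hadapted ℓ).eqOn_id_of_commute hΦ.2.1 (hxU ℓ) hfx fun g hg => hcomm g hg x

/-- The centralizer group `Z_ℓ` is contained in the stabilizer group
`K_ℓ`. -/
theorem stmt10 {X : Type*} [MetricSpace X] [CompactSpace X] [TotallyDisconnectedSpace X]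
    [Nonempty X] (hX : Perfect (Set.univ : Set X))
    {G : Type*} [Group G] [Countable G] (Φ : G → X ≃ₜ X) (hΦ : IsCantorAction Φ)
    (x : X) (U : ℕ → Set X) (hU : IsAdaptedBasis Φ x U) (ℓ : ℕ)
    (f : C(X, X)) (hf : f ∈ actionClosure Φ) (hfx : f x = x)
    (hcomm : ∀ g : G, Φ g '' U ℓ = U ℓ → ∀ z : X, f (Φ g z) = Φ g (f z)) :
    ∀ z ∈ U ℓ, f z = z :=
  stmt10_general Φ hΦ x U hU ℓ f hfx hcomm
end

section
/- Let (X,G,Φ) be a Cantor action, let {U_ℓ} be an adapted neighborhood basis at x ∈ X and {U'_ℓ} an adapted neighborhood basis at y ∈ X, with stabilizer chains K_ℓ := {f ∈ G(Φ) : f(z) = z for all z ∈ U_ℓ} and K'_ℓ := {f ∈ G(Φ) : f(z) = z for all z ∈ U'_ℓ}. Then {K_ℓ} is eventually constant (there is ℓ₀ with K_ℓ = K_{ℓ₀} for all ℓ ≥ ℓ₀) if and only if {K'_ℓ} is eventually constant. In particular, whether the action is stable or wild does not depend on the choice of basepoint or adapted neighborhood basis. -/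
open Set Topology Filter

/-! Stability of the chain is equivalent to a condition on germs at the basepoint alone
(`IsStableAt`): some adapted clopen `W ∋ x` is fixed pointwise by every element of `G(Φ)`
fixing a neighbourhood of `x`. Given a stable chain take `W = U ℓ₀`; conversely such a `W`
contains some `U ℓ₀`, from which on the chain is constant. The germ condition moves from `x`
to any `y`: by minimality some translate `Φ a W` contains `y`; if `f` fixes a neighbourhood
`O` of `y`, pick `Φ g x ∈ O ∩ Φ a W`. The conjugate `(Φ g)⁻¹ ∘ f ∘ Φ g` fixes a neighbourhood
of `x`, hence `W`, so `f` fixes `Φ g W`, which equals `Φ a W` because `W` is adapted. -/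

section CantorActionStability

variable {X : Type*} [MetricSpace X] {G : Type*} {Φ : G → X ≃ₜ X}

def IsStableAt (Φ : G → X ≃ₜ X) (x : X) : Prop :=
  ∃ W : Set X, IsAdapted Φ W ∧ x ∈ W ∧
    ∀ f ∈ actionClosure Φ, (∀ᶠ z in 𝓝 x, f z = z) → ∀ z ∈ W, f z = z

namespace IsAdaptedBasis

variable {x : X} {U : ℕ → Set X}

lemma antitone (hU : IsAdaptedBasis Φ x U) : Antitone U :=
  antitone_nat_of_succ_le fun ℓ => (hU.2.2.2.1 ℓ).subset

lemma stabChain_mono (hU : IsAdaptedBasis Φ x U) : Monotone (stabChain Φ U) :=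
  fun _ _ h _ hf => ⟨hf.1, fun z hz => hf.2 z (hU.antitone h hz)⟩

lemma exists_subset_of_mem_nhds [CompactSpace X] (hU : IsAdaptedBasis Φ x U) {M : Set X}
    (hM : M ∈ 𝓝 x) : ∃ ℓ, U ℓ ⊆ M :=
  exists_subset_nhds_of_compactSpace hU.antitone.directed_ge (fun ℓ => (hU.2.1 ℓ).2.1.1)
    fun z hz => by
      rw [hU.2.2.2.2, Set.mem_singleton_iff] at hz
      rwa [hz]

lemma isStableChain_iff [CompactSpace X] (hU : IsAdaptedBasis Φ x U) :
    IsStableChain Φ U ↔ IsStableAt Φ x := by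
  constructor
  · rintro ⟨ℓ₀, hℓ₀⟩
    refine ⟨U ℓ₀, hU.2.1 ℓ₀, hU.2.2.1 ℓ₀, fun f hf hfix => ?_⟩
    obtain ⟨ℓ₁, hℓ₁⟩ := hU.exists_subset_of_mem_nhds hfix
    have hmem : f ∈ stabChain Φ U (max ℓ₀ ℓ₁) :=
      ⟨hf, fun z hz => hℓ₁ (hU.antitone (le_max_right _ _) hz)⟩
    rw [hℓ₀ _ (le_max_left _ _)] at hmem
    exact hmem.2
  · rintro ⟨W, hW, hxW, hfixW⟩
    obtain ⟨ℓ₀, hℓ₀⟩ := hU.exists_subset_of_mem_nhds (hW.2.1.2.mem_nhds hxW)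
    refine ⟨ℓ₀, fun ℓ hℓ => (hU.stabChain_mono hℓ).antisymm' fun f ⟨hf, hfix⟩ => ?_⟩
    have hnhds : ∀ᶠ z in 𝓝 x, f z = z :=
      Filter.mem_of_superset ((hU.2.1 ℓ).2.1.2.mem_nhds (hU.2.2.1 ℓ)) hfix
    exact ⟨hf, fun z hz => hfixW f hf hnhds z (hℓ₀ hz)⟩

end IsAdaptedBasis

variable [Group G]

namespace IsActionHom

def toMonoidHom (hΦ : IsActionHom Φ) : G →* (X ≃ₜ X) where
  toFun := Φ
  map_one' := Homeomorph.ext hΦ.1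
  map_mul' g h := Homeomorph.ext (hΦ.2 g h)

lemma apply_inv (hΦ : IsActionHom Φ) (g : G) : Φ g⁻¹ = (Φ g).symm :=
  map_inv hΦ.toMonoidHom g

lemma image_mul (hΦ : IsActionHom Φ) (g h : G) (W : Set X) :
    Φ (g * h) '' W = Φ g '' (Φ h '' W) := by
  rw [← Set.image_comp]
  exact Set.image_congr fun z _ => hΦ.2 g h z

end IsActionHom

namespace IsAdapted

lemma image_eq_of_nonempty (hΦ : IsActionHom Φ) {W : Set X} (hW : IsAdapted Φ W) {g a : G}
    (h : (Φ g '' W ∩ Φ a '' W).Nonempty) : Φ g '' W = Φ a '' W := by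
  obtain ⟨_, ⟨u, hu, rfl⟩, v, hv, huv⟩ := h
  have hmeet : Φ (a⁻¹ * g) u = v := by
    rw [hΦ.2, hΦ.apply_inv, ← huv, Homeomorph.symm_apply_apply]
  rw [← mul_inv_cancel_left a g, hΦ.image_mul, hW.2.2 _ ⟨_, ⟨u, hu, rfl⟩, hmeet ▸ hv⟩]

lemma image (hΦ : IsActionHom Φ) {W : Set X} (hW : IsAdapted Φ W) (a : G) :
    IsAdapted Φ (Φ a '' W) := by
  refine ⟨hW.1.image _, ⟨(Φ a).isClosedMap _ hW.2.1.1, (Φ a).isOpenMap _ hW.2.1.2⟩,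
    fun k hk => ?_⟩
  rw [← hΦ.image_mul] at hk ⊢
  exact hW.image_eq_of_nonempty hΦ hk

end IsAdapted

lemma conj_mem_actionClosure (hΦ : IsActionHom Φ) {f : C(X, X)} (hf : f ∈ actionClosure Φ)
    (g : G) : (Φ g⁻¹ : C(X, X)).comp (f.comp (Φ g)) ∈ actionClosure Φ := by
  let conj : C(X, X) → C(X, X) := fun u => (Φ g⁻¹ : C(X, X)).comp (u.comp (Φ g))
  have hcont : Continuous conj :=
    (ContinuousMap.continuous_postcomp _).comp (ContinuousMap.continuous_precomp _)
  refine map_mem_closure (f := conj) hcont hf ?_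
  rintro _ ⟨h, rfl⟩
  refine ⟨g⁻¹ * (h * g), ContinuousMap.ext fun z => ?_⟩
  show Φ (g⁻¹ * (h * g)) z = Φ g⁻¹ (Φ h (Φ g z))
  rw [hΦ.2, hΦ.2]

lemma fixes_image_of_fixes_nhds (hΦ : IsActionHom Φ) {x : X} {W : Set X}
    (hW : ∀ f ∈ actionClosure Φ, (∀ᶠ z in 𝓝 x, f z = z) → ∀ z ∈ W, f z = z)
    {f : C(X, X)} (hf : f ∈ actionClosure Φ) (g : G) (hfix : ∀ᶠ z in 𝓝 (Φ g x), f z = z) :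
    ∀ z ∈ Φ g '' W, f z = z := by
  have hconj : ∀ᶠ z in 𝓝 x, (Φ g⁻¹ : C(X, X)).comp (f.comp (Φ g)) z = z := by
    filter_upwards [(Φ g).continuous.continuousAt.eventually hfix] with z hz
    simp [hz, hΦ.apply_inv]
  rintro _ ⟨w, hw, rfl⟩
  have hw' : (Φ g).symm (f (Φ g w)) = w := by
    simpa [hΦ.apply_inv] using hW _ (conj_mem_actionClosure hΦ hf g) hconj w hw
  simpa using congrArg (Φ g) hw'

lemma IsStableAt.of_isMinimalAction (hΦ : IsActionHom Φ) (hmin : IsMinimalAction Φ)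
    {x : X} (hx : IsStableAt Φ x) (y : X) : IsStableAt Φ y := by
  obtain ⟨W, hW, hxW, hfixW⟩ := hx
  obtain ⟨_, hbW, b, rfl⟩ := (hmin y).inter_open_nonempty W hW.2.1.2 hW.1
  have hyW : y ∈ Φ b⁻¹ '' W := ⟨Φ b y, hbW, by rw [hΦ.apply_inv, Homeomorph.symm_apply_apply]⟩
  refine ⟨Φ b⁻¹ '' W, hW.image hΦ b⁻¹, hyW, fun f hf hfix => ?_⟩
  obtain ⟨O, hOfix, hO, hyO⟩ := eventually_nhds_iff.mp hfix
  have hopen : IsOpen (O ∩ Φ b⁻¹ '' W) := hO.inter ((Φ b⁻¹).isOpenMap _ hW.2.1.2)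
  obtain ⟨_, ⟨hgO, hgW⟩, g, rfl⟩ := (hmin x).inter_open_nonempty _ hopen ⟨y, hyO, hyW⟩
  rw [← hW.image_eq_of_nonempty hΦ ⟨Φ g x, ⟨x, hxW, rfl⟩, hgW⟩]
  exact fixes_image_of_fixes_nhds hΦ hfixW hf g (Filter.mem_of_superset (hO.mem_nhds hgO) hOfix)

end CantorActionStability

theorem stmt11_general {X : Type*} [MetricSpace X] [CompactSpace X]
    {G : Type*} [Group G] (Φ : G → X ≃ₜ X) (hΦ : IsCantorAction Φ)
    (x y : X) (U V : ℕ → Set X)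
    (hU : IsAdaptedBasis Φ x U) (hV : IsAdaptedBasis Φ y V) :
    IsStableChain Φ U ↔ IsStableChain Φ V := by
  rw [hU.isStableChain_iff, hV.isStableChain_iff]
  exact ⟨fun h => h.of_isMinimalAction hΦ.1 hΦ.2.1 y,
    fun h => h.of_isMinimalAction hΦ.1 hΦ.2.1 x⟩

/-- Whether the stabilizer chain is eventually constant is independent of
basepoint and adapted neighborhood basis. -/
theorem stmt11 {X : Type*} [MetricSpace X] [CompactSpace X] [TotallyDisconnectedSpace X]
    [Nonempty X] (hX : Perfect (Set.univ : Set X))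
    {G : Type*} [Group G] [Countable G] (Φ : G → X ≃ₜ X) (hΦ : IsCantorAction Φ)
    (x y : X) (U V : ℕ → Set X)
    (hU : IsAdaptedBasis Φ x U) (hV : IsAdaptedBasis Φ y V) :
    IsStableChain Φ U ↔ IsStableChain Φ V :=
  stmt11_general Φ hΦ x y U V hU hV
end
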